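/- Fix an integer n ≥ 2, w̄ > 0, φ ≠ 0 satisfying Assumption 1, κ > 0, ĝ ∈ 𝒢ₙ and â ∈ ℝⁿ. Define the joint-intervention value function V*_joint(ĝ, â, C) = sup { aᵀ (I − φg)⁻² a : a ∈ ℝⁿ, g ∈ 𝒢ₙ, κ‖g − ĝ‖_F² + ‖a − â‖² ≤ C }. Then lim_{C→∞} V*_joint(ĝ, â, C)/C = 1/(1 − (n−1)φw̄)² if φ > 0, and lim_{C→∞} V*_joint(ĝ, â, C)/C = 1/(1 + φw̄√(⌊n/2⌋⌈n/2⌉))² if φ < 0. -/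

import Mathlib

open Matrix

/-- The set `𝒢ₙ` of symmetric `n×n` networks with zero diagonal and weights in `[0, w̄]`. -/
def Gset (n : ℕ) (w : ℝ) : Set (Matrix (Fin n) (Fin n) ℝ) :=
  {g | g.IsSymm ∧ (∀ i, g i i = 0) ∧ ∀ i j, 0 ≤ g i j ∧ g i j ≤ w}

open Finset Filter Topology WithLp

/-!
Write `B_g = 1 - φ • g`. On `𝒢ₙ` the quadratic form of `B_g` is bounded below by `c ‖x‖²`, with
`c = 1 - (n - 1) φ w̄` when `φ > 0` (because `xᵀ g x ≤ (n - 1) w̄ ‖x‖²`) and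
`c = 1 + φ w̄ √(⌊n/2⌋⌈n/2⌉)` when `φ < 0` (split `x = x⁺ - x⁻`: then `xᵀ g x ≥ -2 w̄ (∑ x⁺)(∑ x⁻)`,
and Cauchy–Schwarz on the two disjoint supports bounds the product). Hence `‖B_g⁻¹ a‖ ≤ ‖a‖ / c`,
and the value `aᵀ B_g⁻² a = ‖B_g⁻¹ a‖²` is at most `(‖â‖ + √C)² / c²`. The constant `c` is an
eigenvalue of `B_g` for the complete network (`φ > 0`) or the balanced complete bipartite network
(`φ < 0`); spending the budget on moving `a` along that eigenvector gives a value
`(√(C - κ ‖g - ĝ‖²) / c - O(1))²`. So `V*_joint(C) / C → 1 / c²`.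
-/

theorem Nat.mul_le_div_two_mul_add_one_div_two {k l n : ℕ} (h : k + l ≤ n) :
    k * l ≤ n / 2 * ((n + 1) / 2) := by
  have h4 : 4 * (k * l) ≤ n * n := by nlinarith [sq_nonneg ((k : ℤ) - l)]
  rcases Nat.even_or_odd' n with ⟨m, rfl | rfl⟩
  · rw [show 2 * m / 2 = m by omega, show (2 * m + 1) / 2 = m by omega]
    nlinarith
  · rw [show (2 * m + 1) / 2 = m by omega, show (2 * m + 1 + 1) / 2 = m + 1 by omega]
    nlinarith

lemma tendsto_sq_mul_sqrt_sub_add_div (a D K : ℝ) :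
    Tendsto (fun C : ℝ => (a * √(C - D) + K) ^ 2 / C) atTop (𝓝 (a ^ 2)) := by
  have hsqrt : Tendsto (fun C : ℝ => √(1 - D * C⁻¹)) atTop (𝓝 1) := by
    simpa using ((tendsto_inv_atTop_zero.const_mul D).const_sub 1).sqrt
  have hinv : Tendsto (fun C : ℝ => K * √C⁻¹) atTop (𝓝 0) := by
    simpa using (tendsto_inv_atTop_zero.sqrt).const_mul K
  have hlim := ((hsqrt.const_mul a).add hinv).pow 2
  simp only [mul_one, add_zero] at hlim
  refine hlim.congr' ?_
  filter_upwards [eventually_gt_atTop 0] with C hC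
  have hs : 0 < √C := Real.sqrt_pos.2 hC
  rw [show 1 - D * C⁻¹ = (C - D) / C by field_simp, Real.sqrt_div' _ hC.le, Real.sqrt_inv]
  field_simp
  rw [Real.sq_sqrt hC.le]

section

variable {ι : Type*} [Fintype ι]

lemma dotProduct_self_eq_sum_sq (x : ι → ℝ) : x ⬝ᵥ x = ∑ i, x i ^ 2 := by
  simp only [dotProduct, sq]

lemma dotProduct_self_eq_norm_sq (x : ι → ℝ) : x ⬝ᵥ x = ‖toLp 2 x‖ ^ 2 := by
  rw [← real_inner_self_eq_norm_sq, EuclideanSpace.inner_toLp_toLp, star_trivial]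

lemma dotProduct_le_norm_mul_norm (x y : ι → ℝ) : x ⬝ᵥ y ≤ ‖toLp 2 x‖ * ‖toLp 2 y‖ := by
  simpa [EuclideanSpace.inner_toLp_toLp, mul_comm] using real_inner_le_norm (toLp 2 y) (toLp 2 x)

lemma sum_sq_sub_eq_dist_sq (x y : ι → ℝ) :
    ∑ i, (x i - y i) ^ 2 = dist (toLp 2 x) (toLp 2 y) ^ 2 := by
  rw [EuclideanSpace.dist_eq, Real.sq_sqrt (by positivity)]
  simp [Real.dist_eq, sq_abs]

lemma mul_norm_le_norm_mulVec {B : Matrix ι ι ℝ} {c : ℝ}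
    (hB : ∀ x, c * (x ⬝ᵥ x) ≤ x ⬝ᵥ (B *ᵥ x)) (y : ι → ℝ) :
    c * ‖toLp 2 y‖ ≤ ‖toLp 2 (B *ᵥ y)‖ := by
  have h : c * ‖toLp 2 y‖ ^ 2 ≤ ‖toLp 2 y‖ * ‖toLp 2 (B *ᵥ y)‖ := by
    rw [← dotProduct_self_eq_norm_sq]
    exact (hB y).trans (dotProduct_le_norm_mul_norm _ _)
  rcases (norm_nonneg (toLp 2 y)).eq_or_lt with h0 | hpos
  · rw [← h0, mul_zero]; exact norm_nonneg _
  · nlinarith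

theorem dotProduct_mulVec_le_of_diag_eq_zero {g : Matrix ι ι ℝ} {w : ℝ}
    (hdiag : ∀ i, g i i = 0) (hnonneg : ∀ i j, 0 ≤ g i j) (hle : ∀ i j, g i j ≤ w)
    (x : ι → ℝ) : x ⬝ᵥ (g *ᵥ x) ≤ ((Fintype.card ι : ℝ) - 1) * w * (x ⬝ᵥ x) := by
  classical
  -- AM-GM off the diagonal; the correction term makes the bound exact on the diagonal.
  have hterm : ∀ i j, x i * (g i j * x j) ≤
      w / 2 * (x i ^ 2 + x j ^ 2) - if i = j then w * x i ^ 2 else 0 := by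
    intro i j
    split_ifs with hij
    · subst hij; rw [hdiag]; exact le_of_eq (by ring)
    · nlinarith [hnonneg i j, hle i j, sq_nonneg (x i - x j), sq_nonneg (x i + x j)]
  calc x ⬝ᵥ (g *ᵥ x) = ∑ i, ∑ j, x i * (g i j * x j) := by
        simp only [dotProduct, mulVec, Finset.mul_sum]
    _ ≤ ∑ i, ∑ j, (w / 2 * (x i ^ 2 + x j ^ 2) - if i = j then w * x i ^ 2 else 0) :=
        Finset.sum_le_sum fun i _ => Finset.sum_le_sum fun j _ => hterm i j
    _ = ((Fintype.card ι : ℝ) - 1) * w * (x ⬝ᵥ x) := by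
        simp only [Finset.sum_sub_distrib, Finset.sum_ite_eq, Finset.mem_univ, if_true,
          mul_add, Finset.sum_add_distrib, Finset.sum_const, Finset.card_univ, nsmul_eq_mul,
          ← Finset.mul_sum, dotProduct_self_eq_sum_sq]
        ring

theorem sq_sum_le_card_support_mul_sum_sq (y : ι → ℝ) :
    (∑ i, y i) ^ 2 ≤ (#{i | y i ≠ 0} : ℝ) * ∑ i, y i ^ 2 := by
  calc (∑ i, y i) ^ 2 = (∑ i with y i ≠ 0, y i) ^ 2 := by rw [Finset.sum_filter_ne_zero]
    _ ≤ (#{i | y i ≠ 0} : ℝ) * ∑ i with y i ≠ 0, y i ^ 2 := sq_sum_le_card_mul_sum_sq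
    _ ≤ (#{i | y i ≠ 0} : ℝ) * ∑ i, y i ^ 2 := by
        gcongr _ * ?_
        exact Finset.sum_le_sum_of_subset_of_nonneg (Finset.filter_subset _ _)
          fun i _ _ => sq_nonneg (y i)

theorem sum_mul_sum_le_of_mul_eq_zero {p q : ι → ℝ} (hpq : ∀ i, p i * q i = 0) :
    (∑ i, p i) * (∑ i, q i) ≤
      √((Fintype.card ι / 2 : ℕ) * ((Fintype.card ι + 1) / 2 : ℕ)) *
        ((∑ i, p i ^ 2 + ∑ i, q i ^ 2) / 2) := by
  classical
  set k := #{i | p i ≠ 0}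
  set l := #{i | q i ≠ 0}
  have hkl : k + l ≤ Fintype.card ι := by
    rw [← Finset.card_union_of_disjoint]
    · exact Finset.card_le_univ _
    · refine Finset.disjoint_filter.2 fun i _ hp hq => ?_
      exact (mul_ne_zero hp hq) (hpq i)
  have hN : (k * l : ℝ) ≤ (Fintype.card ι / 2 : ℕ) * ((Fintype.card ι + 1) / 2 : ℕ) := by
    exact_mod_cast Nat.mul_le_div_two_mul_add_one_div_two hkl
  have hP := sq_sum_le_card_support_mul_sum_sq p
  have hQ := sq_sum_le_card_support_mul_sum_sq q
  have hA : 0 ≤ ∑ i, p i ^ 2 := by positivity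
  have hB : 0 ≤ ∑ i, q i ^ 2 := by positivity
  have hsq : ((∑ i, p i) * (∑ i, q i)) ^ 2 ≤
      (Fintype.card ι / 2 : ℕ) * ((Fintype.card ι + 1) / 2 : ℕ) *
        ((∑ i, p i ^ 2 + ∑ i, q i ^ 2) / 2) ^ 2 := by
    calc ((∑ i, p i) * (∑ i, q i)) ^ 2 = (∑ i, p i) ^ 2 * (∑ i, q i) ^ 2 := mul_pow _ _ _
      _ ≤ (k * ∑ i, p i ^ 2) * (l * ∑ i, q i ^ 2) := by gcongr
      _ = (k * l : ℝ) * ((∑ i, p i ^ 2) * ∑ i, q i ^ 2) := by ring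
      _ ≤ _ := by
        gcongr
        nlinarith [sq_nonneg (∑ i, p i ^ 2 - ∑ i, q i ^ 2)]
  calc (∑ i, p i) * (∑ i, q i) ≤ |(∑ i, p i) * (∑ i, q i)| := le_abs_self _
    _ ≤ √((Fintype.card ι / 2 : ℕ) * ((Fintype.card ι + 1) / 2 : ℕ) *
        ((∑ i, p i ^ 2 + ∑ i, q i ^ 2) / 2) ^ 2) := Real.abs_le_sqrt hsq
    _ = _ := by rw [Real.sqrt_mul (by positivity), Real.sqrt_sq (by positivity)]

theorem neg_le_dotProduct_mulVec {g : Matrix ι ι ℝ} {w : ℝ} (hw : 0 ≤ w)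
    (hnonneg : ∀ i j, 0 ≤ g i j) (hle : ∀ i j, g i j ≤ w) (x : ι → ℝ) :
    -(w * √((Fintype.card ι / 2 : ℕ) * ((Fintype.card ι + 1) / 2 : ℕ)) * (x ⬝ᵥ x)) ≤
      x ⬝ᵥ (g *ᵥ x) := by
  set p : ι → ℝ := fun i => (x i)⁺
  set q : ι → ℝ := fun i => (x i)⁻
  have hx : ∀ i, x i = p i - q i := fun i => (posPart_sub_negPart (x i)).symm
  have hpq : ∀ i, p i * q i = 0 := by
    intro i
    rcases le_total 0 (x i) with h | h
    · simp [q, negPart_eq_zero.2 h]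
    · simp [p, posPart_eq_zero.2 h]
  have hterm : ∀ i j, -(w * (p i * q j + q i * p j)) ≤ x i * (g i j * x j) := by
    intro i j
    have hp : ∀ i, 0 ≤ p i := fun i => posPart_nonneg (x i)
    have hq : ∀ i, 0 ≤ q i := fun i => negPart_nonneg (x i)
    rw [hx i, hx j]
    nlinarith [mul_nonneg (sub_nonneg.2 (hle i j))
        (add_nonneg (mul_nonneg (hp i) (hq j)) (mul_nonneg (hq i) (hp j))),
      mul_nonneg (hnonneg i j) (mul_nonneg (hp i) (hp j)),
      mul_nonneg (hnonneg i j) (mul_nonneg (hq i) (hq j))]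
  have hsq : ∑ i, p i ^ 2 + ∑ i, q i ^ 2 = x ⬝ᵥ x := by
    rw [dotProduct_self_eq_sum_sq, ← Finset.sum_add_distrib]
    refine Finset.sum_congr rfl fun i _ => ?_
    rw [hx i]
    linear_combination 2 * hpq i
  have hcross : ∑ i, ∑ j, w * (p i * q j + q i * p j) = 2 * w * ((∑ i, p i) * ∑ i, q i) := by
    simp only [mul_add, Finset.sum_add_distrib, ← Finset.mul_sum, ← Finset.sum_mul]
    ring
  calc -(w * √((Fintype.card ι / 2 : ℕ) * ((Fintype.card ι + 1) / 2 : ℕ)) * (x ⬝ᵥ x))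
      ≤ -(2 * w * ((∑ i, p i) * ∑ i, q i)) := by
        rw [← hsq]
        nlinarith [sum_mul_sum_le_of_mul_eq_zero hpq]
    _ = ∑ i, ∑ j, -(w * (p i * q j + q i * p j)) := by
        rw [← hcross]; simp only [Finset.sum_neg_distrib]
    _ ≤ ∑ i, ∑ j, x i * (g i j * x j) :=
        Finset.sum_le_sum fun i _ => Finset.sum_le_sum fun j _ => hterm i j
    _ = x ⬝ᵥ (g *ᵥ x) := by simp only [dotProduct, mulVec, Finset.mul_sum]

variable [DecidableEq ι]

lemma isUnit_det_of_coercive {B : Matrix ι ι ℝ} {c : ℝ} (hc : 0 < c)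
    (hB : ∀ x, c * (x ⬝ᵥ x) ≤ x ⬝ᵥ (B *ᵥ x)) : IsUnit B.det := by
  refine isUnit_iff_ne_zero.2 fun hdet => ?_
  obtain ⟨v, hv, hBv⟩ := exists_mulVec_eq_zero_iff.2 hdet
  have h := hB v
  rw [hBv, dotProduct_zero] at h
  have hvv : v ⬝ᵥ v ≤ 0 := nonpos_of_mul_nonpos_right h hc
  rw [dotProduct_self_eq_norm_sq] at hvv
  exact hv (by simpa using le_antisymm hvv (sq_nonneg _))

lemma dotProduct_inv_sq_mulVec {B : Matrix ι ι ℝ} (hB : B.IsSymm) (a : ι → ℝ) :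
    a ⬝ᵥ ((B⁻¹ ^ 2) *ᵥ a) = (B⁻¹ *ᵥ a) ⬝ᵥ (B⁻¹ *ᵥ a) := by
  rw [sq, ← mulVec_mulVec, dotProduct_mulVec, ← vecMul_transpose, hB.inv.eq]

def jointValues (G : Set (Matrix ι ι ℝ)) (cost : Matrix ι ι ℝ → ℝ) (φ : ℝ) (ahat : ι → ℝ)
    (C : ℝ) : Set ℝ :=
  {v | ∃ (a : ι → ℝ) (g : Matrix ι ι ℝ), g ∈ G ∧ cost g + ∑ i, (a i - ahat i) ^ 2 ≤ C ∧
    v = a ⬝ᵥ (((1 - φ • g)⁻¹ ^ 2) *ᵥ a)}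

variable {G : Set (Matrix ι ι ℝ)} {cost : Matrix ι ι ℝ → ℝ} {φ c : ℝ} {ahat : ι → ℝ}

lemma le_of_mem_jointValues (hc : 0 < c) (hsymm : ∀ g ∈ G, g.IsSymm) (hcost : ∀ g ∈ G, 0 ≤ cost g)
    (hcoer : ∀ g ∈ G, ∀ x, c * (x ⬝ᵥ x) ≤ x ⬝ᵥ ((1 - φ • g) *ᵥ x)) {C v : ℝ}
    (hv : v ∈ jointValues G cost φ ahat C) :
    v ≤ (c⁻¹ * √C + c⁻¹ * ‖toLp 2 ahat‖) ^ 2 := by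
  obtain ⟨a, g, hg, hC, rfl⟩ := hv
  set B := 1 - φ • g
  have hB : ∀ x, c * (x ⬝ᵥ x) ≤ x ⬝ᵥ (B *ᵥ x) := hcoer g hg
  have hBa : B *ᵥ (B⁻¹ *ᵥ a) = a := by
    rw [mulVec_mulVec, mul_nonsing_inv _ (isUnit_det_of_coercive hc hB), one_mulVec]
  have hdist : dist (toLp 2 a) (toLp 2 ahat) ≤ √C := by
    rw [← Real.sqrt_sq dist_nonneg, ← sum_sq_sub_eq_dist_sq]
    exact Real.sqrt_le_sqrt (by linarith [hcost g hg])
  have hnorm : c * ‖toLp 2 (B⁻¹ *ᵥ a)‖ ≤ √C + ‖toLp 2 ahat‖ := by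
    calc c * ‖toLp 2 (B⁻¹ *ᵥ a)‖ ≤ ‖toLp 2 a‖ := by
          simpa only [hBa] using mul_norm_le_norm_mulVec hB (B⁻¹ *ᵥ a)
      _ ≤ ‖toLp 2 ahat‖ + dist (toLp 2 a) (toLp 2 ahat) := norm_le_norm_add_const_of_dist_le le_rfl
      _ ≤ √C + ‖toLp 2 ahat‖ := by linarith
  rw [dotProduct_inv_sq_mulVec (isSymm_one.sub ((hsymm g hg).smul φ)), dotProduct_self_eq_norm_sq,
    ← mul_add]
  gcongr
  rwa [le_inv_mul_iff₀ hc]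

lemma exists_mem_jointValues_ge (hc : 0 < c) (hsymm : ∀ g ∈ G, g.IsSymm)
    (hcoer : ∀ g ∈ G, ∀ x, c * (x ⬝ᵥ x) ≤ x ⬝ᵥ ((1 - φ • g) *ᵥ x))
    {gstar : Matrix ι ι ℝ} (hgstar : gstar ∈ G) {u : ι → ℝ} (hu : u ≠ 0)
    (heig : (1 - φ • gstar) *ᵥ u = c • u) {C : ℝ} (hC : cost gstar ≤ C)
    (hK : ‖toLp 2 ((1 - φ • gstar)⁻¹ *ᵥ ahat)‖ ≤ c⁻¹ * √(C - cost gstar)) :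
    ∃ v ∈ jointValues G cost φ ahat C,
      (c⁻¹ * √(C - cost gstar) - ‖toLp 2 ((1 - φ • gstar)⁻¹ *ᵥ ahat)‖) ^ 2 ≤ v := by
  set B := 1 - φ • gstar
  set s := √(C - cost gstar)
  have hB : ∀ x, c * (x ⬝ᵥ x) ≤ x ⬝ᵥ (B *ᵥ x) := hcoer gstar hgstar
  have hunorm : ‖toLp 2 u‖ ≠ 0 := by simpa using hu
  set e := ‖toLp 2 u‖⁻¹ • u
  have he : ‖toLp 2 e‖ = 1 := by
    rw [WithLp.toLp_smul, norm_smul, norm_inv, norm_norm, inv_mul_cancel₀ hunorm]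
  have hBe : B⁻¹ *ᵥ e = c⁻¹ • e := by
    have hinv : B⁻¹ *ᵥ (B *ᵥ e) = e := by
      rw [mulVec_mulVec, nonsing_inv_mul _ (isUnit_det_of_coercive hc hB), one_mulVec]
    rw [mulVec_smul, heig, smul_comm, mulVec_smul] at hinv
    exact ((inv_smul_eq_iff₀ hc.ne').2 hinv.symm).symm
  set a := ahat + s • e
  refine ⟨a ⬝ᵥ ((B⁻¹ ^ 2) *ᵥ a), ⟨a, gstar, hgstar, ?_, rfl⟩, ?_⟩
  · have hs : s ^ 2 = C - cost gstar := Real.sq_sqrt (by linarith)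
    rw [sum_sq_sub_eq_dist_sq, dist_eq_norm, ← WithLp.toLp_sub, add_sub_cancel_left,
      WithLp.toLp_smul, norm_smul, he, Real.norm_of_nonneg (Real.sqrt_nonneg _), mul_one, hs]
    linarith
  · have hBa : toLp 2 (B⁻¹ *ᵥ a) = toLp 2 (B⁻¹ *ᵥ ahat) + (c⁻¹ * s) • toLp 2 e := by
      rw [mulVec_add, mulVec_smul, hBe, smul_smul, mul_comm, WithLp.toLp_add, WithLp.toLp_smul]
    have hlow : c⁻¹ * s - ‖toLp 2 (B⁻¹ *ᵥ ahat)‖ ≤ ‖toLp 2 (B⁻¹ *ᵥ a)‖ := by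
      have := norm_sub_norm_le ((c⁻¹ * s) • toLp 2 e) (-toLp 2 (B⁻¹ *ᵥ ahat))
      rw [norm_smul, he, mul_one, norm_neg, sub_neg_eq_add, add_comm, ← hBa,
        Real.norm_of_nonneg (by positivity)] at this
      exact this
    rw [dotProduct_inv_sq_mulVec (isSymm_one.sub ((hsymm gstar hgstar).smul φ)),
      dotProduct_self_eq_norm_sq]
    exact pow_le_pow_left₀ (sub_nonneg.2 hK) hlow 2

theorem tendsto_sSup_jointValues_div (hc : 0 < c) (hsymm : ∀ g ∈ G, g.IsSymm)
    (hcost : ∀ g ∈ G, 0 ≤ cost g)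
    (hcoer : ∀ g ∈ G, ∀ x, c * (x ⬝ᵥ x) ≤ x ⬝ᵥ ((1 - φ • g) *ᵥ x))
    {gstar : Matrix ι ι ℝ} (hgstar : gstar ∈ G) {u : ι → ℝ} (hu : u ≠ 0)
    (heig : (1 - φ • gstar) *ᵥ u = c • u) (ahat : ι → ℝ) :
    Tendsto (fun C => sSup (jointValues G cost φ ahat C) / C) atTop (𝓝 (1 / c ^ 2)) := by
  set D := cost gstar
  set K := ‖toLp 2 ((1 - φ • gstar)⁻¹ *ᵥ ahat)‖
  have hbdd : ∀ C, BddAbove (jointValues G cost φ ahat C) := fun C =>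
    ⟨_, fun v hv => le_of_mem_jointValues hc hsymm hcost hcoer hv⟩
  rw [one_div, ← inv_pow]
  refine tendsto_of_tendsto_of_tendsto_of_le_of_le'
    (tendsto_sq_mul_sqrt_sub_add_div c⁻¹ D (-K))
    (by simpa using tendsto_sq_mul_sqrt_sub_add_div c⁻¹ 0 (c⁻¹ * ‖toLp 2 ahat‖)) ?_ ?_
  · filter_upwards [eventually_ge_atTop (D + (c * K) ^ 2), eventually_gt_atTop 0]
      with C hC hCpos
    have hDC : D ≤ C := by nlinarith
    have hK : K ≤ c⁻¹ * √(C - D) := by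
      rw [le_inv_mul_iff₀ hc]
      exact Real.le_sqrt_of_sq_le (by linarith)
    obtain ⟨v, hv, hle⟩ := exists_mem_jointValues_ge hc hsymm hcoer hgstar hu heig hDC hK
    rw [← sub_eq_add_neg]
    gcongr
    exact hle.trans (le_csSup (hbdd C) hv)
  · filter_upwards [eventually_gt_atTop 0] with C hCpos
    gcongr
    exact Real.sSup_le (fun v hv => le_of_mem_jointValues hc hsymm hcost hcoer hv) (sq_nonneg _)

end

section

variable {ι : Type*} [Fintype ι] [DecidableEq ι]

lemma dotProduct_one_sub_smul_mulVec (φ : ℝ) (g : Matrix ι ι ℝ) (x : ι → ℝ) :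
    x ⬝ᵥ ((1 - φ • g) *ᵥ x) = x ⬝ᵥ x - φ * (x ⬝ᵥ (g *ᵥ x)) := by
  rw [sub_mulVec, one_mulVec, smul_mulVec, dotProduct_sub, dotProduct_smul, smul_eq_mul]

lemma one_sub_smul_mulVec_of_mulVec_eq_smul {g : Matrix ι ι ℝ} {u : ι → ℝ} {μ : ℝ}
    (h : g *ᵥ u = μ • u) (φ : ℝ) : (1 - φ • g) *ᵥ u = (1 - φ * μ) • u := by
  rw [sub_mulVec, one_mulVec, smul_mulVec, h, smul_smul, sub_smul, one_smul]

variable (ι) in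
def completeNetwork (w : ℝ) : Matrix ι ι ℝ := of fun i j => if i = j then 0 else w

variable (ι) in
lemma completeNetwork_mulVec_one (w : ℝ) :
    completeNetwork ι w *ᵥ 1 = (((Fintype.card ι : ℝ) - 1) * w) • 1 := by
  ext i
  simp [completeNetwork, mulVec, dotProduct, Finset.sum_ite, Finset.filter_ne,
    Nat.cast_pred (Fintype.card_pos_iff.2 ⟨i⟩)]

def bipartiteNetwork (s : Finset ι) (w : ℝ) : Matrix ι ι ℝ :=
  of fun i j => if (i ∈ s ↔ j ∈ s) then 0 else w

noncomputable def bipartiteVector (s : Finset ι) : ι → ℝ :=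
  fun i => if i ∈ s then √(#sᶜ : ℝ) else -√(#s : ℝ)

lemma bipartiteNetwork_mulVec_bipartiteVector (s : Finset ι) (w : ℝ) :
    bipartiteNetwork s w *ᵥ bipartiteVector s = (-(w * √(#s * #sᶜ : ℝ))) • bipartiteVector s := by
  ext i
  have hs : √(#s : ℝ) * √(#s : ℝ) = #s := Real.mul_self_sqrt (Nat.cast_nonneg _)
  have hsc : √(#sᶜ : ℝ) * √(#sᶜ : ℝ) = #sᶜ := Real.mul_self_sqrt (Nat.cast_nonneg _)
  by_cases hi : i ∈ s
  · have hterm : ∀ j, bipartiteNetwork s w i j * bipartiteVector s j =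
        if j ∈ sᶜ then w * -√(#s : ℝ) else 0 := by
      intro j
      by_cases hj : j ∈ s <;> simp [bipartiteNetwork, bipartiteVector, hi, hj]
    rw [Pi.smul_apply, smul_eq_mul, mulVec, dotProduct, sum_congr rfl fun j _ => hterm j,
      sum_ite_mem_eq, sum_const, nsmul_eq_mul, Real.sqrt_mul (Nat.cast_nonneg _)]
    simp only [bipartiteVector, hi, if_true]
    linear_combination (w * √(#s : ℝ)) * hsc
  · have hterm : ∀ j, bipartiteNetwork s w i j * bipartiteVector s j =
        if j ∈ s then w * √(#sᶜ : ℝ) else 0 := by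
      intro j
      by_cases hj : j ∈ s <;> simp [bipartiteNetwork, bipartiteVector, hi, hj]
    rw [Pi.smul_apply, smul_eq_mul, mulVec, dotProduct, sum_congr rfl fun j _ => hterm j,
      sum_ite_mem_eq, sum_const, nsmul_eq_mul, Real.sqrt_mul (Nat.cast_nonneg _)]
    simp only [bipartiteVector, hi, if_false]
    linear_combination (-(w * √(#sᶜ : ℝ))) * hs

lemma bipartiteVector_ne_zero {s : Finset ι} (hs : s.Nonempty) (hsc : sᶜ.Nonempty) :
    bipartiteVector s ≠ 0 := by
  obtain ⟨i, hi⟩ := hs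
  refine fun h => (Real.sqrt_pos.2 (Nat.cast_pos.2 hsc.card_pos)).ne' ?_
  simpa [bipartiteVector, hi] using congrFun h i

end

section Gset

variable {n : ℕ} {w φ : ℝ}

lemma completeNetwork_mem_Gset (hw : 0 ≤ w) : completeNetwork (Fin n) w ∈ Gset n w := by
  refine ⟨?_, fun i => by simp [completeNetwork], fun i j => ?_⟩
  · ext i j
    simp [completeNetwork, eq_comm]
  · by_cases h : i = j <;> simp [completeNetwork, h, hw]

lemma bipartiteNetwork_mem_Gset (s : Finset (Fin n)) (hw : 0 ≤ w) :
    bipartiteNetwork s w ∈ Gset n w := by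
  refine ⟨?_, fun i => by simp [bipartiteNetwork], fun i j => ?_⟩
  · ext i j
    simp [bipartiteNetwork, Iff.comm]
  · by_cases h : (i ∈ s ↔ j ∈ s) <;> simp [bipartiteNetwork, h, hw]

lemma one_sub_mul_dotProduct_le_of_mem_Gset (hφ : 0 ≤ φ) {g : Matrix (Fin n) (Fin n) ℝ}
    (hg : g ∈ Gset n w) (x : Fin n → ℝ) :
    (1 - ((n : ℝ) - 1) * φ * w) * (x ⬝ᵥ x) ≤ x ⬝ᵥ ((1 - φ • g) *ᵥ x) := by
  have h := dotProduct_mulVec_le_of_diag_eq_zero hg.2.1 (fun i j => (hg.2.2 i j).1)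
    (fun i j => (hg.2.2 i j).2) x
  rw [Fintype.card_fin] at h
  rw [dotProduct_one_sub_smul_mulVec]
  nlinarith [mul_le_mul_of_nonneg_left h hφ]

lemma one_add_mul_dotProduct_le_of_mem_Gset (hφ : φ ≤ 0) (hw : 0 ≤ w)
    {g : Matrix (Fin n) (Fin n) ℝ} (hg : g ∈ Gset n w) (x : Fin n → ℝ) :
    (1 + φ * w * √(((n / 2 : ℕ) : ℝ) * (((n + 1) / 2 : ℕ) : ℝ))) * (x ⬝ᵥ x) ≤
      x ⬝ᵥ ((1 - φ • g) *ᵥ x) := by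
  have h := neg_le_dotProduct_mulVec hw (fun i j => (hg.2.2 i j).1) (fun i j => (hg.2.2 i j).2) x
  rw [Fintype.card_fin] at h
  rw [dotProduct_one_sub_smul_mulVec]
  nlinarith [mul_le_mul_of_nonpos_left h hφ]

end Gset

lemma one_sub_mul_pos_of_lt {n : ℕ} (hn : 2 ≤ n) {φ w : ℝ} (hφ : 0 < φ)
    (hw : w < 1 / (φ * ((n : ℝ) - 1))) : 0 < 1 - ((n : ℝ) - 1) * φ * w := by
  have hn' : (1 : ℝ) < n := by exact_mod_cast hn
  rw [lt_div_iff₀ (by nlinarith)] at hw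
  linarith

lemma two_mul_sqrt_div_two_mul_of_even {n : ℕ} (h : Even n) :
    2 * √(((n / 2 : ℕ) : ℝ) * (((n + 1) / 2 : ℕ) : ℝ)) = n := by
  obtain ⟨k, rfl⟩ := h
  rw [show (k + k) / 2 = k by omega, show (k + k + 1) / 2 = k by omega,
    Real.sqrt_mul_self (Nat.cast_nonneg k)]
  push_cast
  ring

lemma two_mul_sqrt_div_two_mul_of_odd {n : ℕ} (h : Odd n) :
    2 * √(((n / 2 : ℕ) : ℝ) * (((n + 1) / 2 : ℕ) : ℝ)) = √((n : ℝ) ^ 2 - 1) := by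
  obtain ⟨k, rfl⟩ := h
  rw [show (2 * k + 1) / 2 = k by omega, show (2 * k + 1 + 1) / 2 = k + 1 by omega,
    ← Real.sqrt_sq (zero_le_two : (0 : ℝ) ≤ 2), ← Real.sqrt_mul (sq_nonneg _)]
  congr 1
  push_cast
  ring

lemma one_add_mul_sqrt_pos_of_lt {n : ℕ} (hn : 2 ≤ n) {φ w : ℝ} (hφ : φ < 0)
    (hEven : Even n → w < -2 / (φ * n)) (hOdd : Odd n → w < -2 / (φ * √((n : ℝ) ^ 2 - 1))) :
    0 < 1 + φ * w * √(((n / 2 : ℕ) : ℝ) * (((n + 1) / 2 : ℕ) : ℝ)) := by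
  set M := √(((n / 2 : ℕ) : ℝ) * (((n + 1) / 2 : ℕ) : ℝ))
  have hM : 0 < M := by
    have h1 : (1 : ℝ) ≤ (n / 2 : ℕ) := by exact_mod_cast (by omega : 1 ≤ n / 2)
    have h2 : (1 : ℝ) ≤ ((n + 1) / 2 : ℕ) := by exact_mod_cast (by omega : 1 ≤ (n + 1) / 2)
    exact Real.sqrt_pos.2 (by nlinarith)
  have hw : w < -2 / (φ * (2 * M)) := by
    rcases Nat.even_or_odd n with h | h
    · rw [two_mul_sqrt_div_two_mul_of_even h]; exact hEven h
    · rw [two_mul_sqrt_div_two_mul_of_odd h]; exact hOdd h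
  rw [lt_div_iff_of_neg (by nlinarith)] at hw
  linarith

lemma exists_finset_card_eq_div_two (n : ℕ) :
    ∃ s : Finset (Fin n), #s = n / 2 ∧ #sᶜ = (n + 1) / 2 := by
  obtain ⟨s, -, hs⟩ := exists_subset_card_eq (s := (univ : Finset (Fin n)))
    (by simpa using Nat.div_le_self n 2)
  refine ⟨s, hs, ?_⟩
  rw [card_compl, Fintype.card_fin, hs]
  omega

theorem stmt16_general (n : ℕ) (hn : 2 ≤ n) (w φ κ : ℝ) (hw : 0 < w) (hκ : 0 < κ)
    (hpos : 0 < φ → w < 1 / (φ * ((n : ℝ) - 1)))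
    (hnegEven : φ < 0 → Even n → w < -2 / (φ * (n : ℝ)))
    (hnegOdd : φ < 0 → Odd n → w < -2 / (φ * Real.sqrt ((n : ℝ) ^ 2 - 1)))
    (ghat : Matrix (Fin n) (Fin n) ℝ) (ahat : Fin n → ℝ) :
    let Vjoint : ℝ → ℝ := fun C =>
      sSup {v : ℝ | ∃ (a : Fin n → ℝ) (g : Matrix (Fin n) (Fin n) ℝ),
        g ∈ Gset n w ∧
        κ * (∑ i, ∑ j, (g i j - ghat i j) ^ 2) + (∑ i, (a i - ahat i) ^ 2) ≤ C ∧
        v = a ⬝ᵥ (((1 - φ • g)⁻¹ ^ 2).mulVec a)}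
    (0 < φ →
      Filter.Tendsto (fun C : ℝ => Vjoint C / C) Filter.atTop
        (nhds (1 / (1 - ((n : ℝ) - 1) * φ * w) ^ 2))) ∧
    (φ < 0 →
      Filter.Tendsto (fun C : ℝ => Vjoint C / C) Filter.atTop
        (nhds (1 / (1 + φ * w *
          Real.sqrt (((n / 2 : ℕ) : ℝ) * (((n + 1) / 2 : ℕ) : ℝ))) ^ 2))) := by
  intro Vjoint
  have hsymm : ∀ g ∈ Gset n w, g.IsSymm := fun g hg => hg.1
  have hcost : ∀ g ∈ Gset n w, 0 ≤ κ * ∑ i, ∑ j, (g i j - ghat i j) ^ 2 :=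
    fun g _ => by positivity
  refine ⟨fun hφ => ?_, fun hφ => ?_⟩
  · have heig := one_sub_smul_mulVec_of_mulVec_eq_smul (completeNetwork_mulVec_one (Fin n) w) φ
    rw [Fintype.card_fin, ← mul_assoc, mul_comm φ] at heig
    have hone : (1 : Fin n → ℝ) ≠ 0 := fun h => by simpa using congrFun h ⟨0, by omega⟩
    exact tendsto_sSup_jointValues_div (one_sub_mul_pos_of_lt hn hφ (hpos hφ)) hsymm hcost
      (fun g hg => one_sub_mul_dotProduct_le_of_mem_Gset hφ.le hg)
      (completeNetwork_mem_Gset hw.le) hone heig ahat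
  · obtain ⟨s, hs, hsc⟩ := exists_finset_card_eq_div_two n
    have heig :=
      one_sub_smul_mulVec_of_mulVec_eq_smul (bipartiteNetwork_mulVec_bipartiteVector s w) φ
    rw [hs, hsc, mul_neg, sub_neg_eq_add, ← mul_assoc] at heig
    exact tendsto_sSup_jointValues_div (one_add_mul_sqrt_pos_of_lt hn hφ (hnegEven hφ) (hnegOdd hφ))
      hsymm hcost (fun g hg => one_add_mul_dotProduct_le_of_mem_Gset hφ.le hw.le hg)
      (bipartiteNetwork_mem_Gset s hw.le)
      (bipartiteVector_ne_zero (card_pos.1 (by omega)) (card_pos.1 (by omega))) heig ahat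

/-- Proposition 2 (joint intervention): the joint-intervention value function
`V*_joint(ĝ, â, C)` satisfies `lim_{C→∞} V*_joint/C = 1/(1 − (n−1)φw̄)²` for `φ > 0`, and
`lim_{C→∞} V*_joint/C = 1/(1 + φw̄√(⌊n/2⌋⌈n/2⌉))²` for `φ < 0`. -/
theorem stmt16 (n : ℕ) (hn : 2 ≤ n) (w φ κ : ℝ) (hw : 0 < w) (hφ : φ ≠ 0) (hκ : 0 < κ)
    (hpos : 0 < φ → w < 1 / (φ * ((n : ℝ) - 1)))
    (hnegEven : φ < 0 → Even n → w < -2 / (φ * (n : ℝ)))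
    (hnegOdd : φ < 0 → Odd n → w < -2 / (φ * Real.sqrt ((n : ℝ) ^ 2 - 1)))
    (ghat : Matrix (Fin n) (Fin n) ℝ) (hghat : ghat ∈ Gset n w) (ahat : Fin n → ℝ) :
    let Vjoint : ℝ → ℝ := fun C =>
      sSup {v : ℝ | ∃ (a : Fin n → ℝ) (g : Matrix (Fin n) (Fin n) ℝ),
        g ∈ Gset n w ∧
        κ * (∑ i, ∑ j, (g i j - ghat i j) ^ 2) + (∑ i, (a i - ahat i) ^ 2) ≤ C ∧
        v = a ⬝ᵥ (((1 - φ • g)⁻¹ ^ 2).mulVec a)}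
    (0 < φ →
      Filter.Tendsto (fun C : ℝ => Vjoint C / C) Filter.atTop
        (nhds (1 / (1 - ((n : ℝ) - 1) * φ * w) ^ 2))) ∧
    (φ < 0 →
      Filter.Tendsto (fun C : ℝ => Vjoint C / C) Filter.atTop
        (nhds (1 / (1 + φ * w *
          Real.sqrt (((n / 2 : ℕ) : ℝ) * (((n + 1) / 2 : ℕ) : ℝ))) ^ 2))) :=
  stmt16_general n hn w φ κ hw hκ hpos hnegEven hnegOdd ghat ahat
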